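/- Let K > 0 and let w, z ∈ ℝⁿ with Euclidean distance e = |w − z| > 0. Let Σ be the hyperplane {y : yⁿ = wⁿ − (K+1)e}, let C̊ = ℝ_{>0}·(B_{ℝⁿ⁻¹}(0,1) × {K}) be the open downward-shifted cone construction (so that w − C̊ and z − C̊ are cones opening downward with slope K), and let Π: ℝⁿ → ℝⁿ⁻¹ be projection onto the first n−1 coordinates. Suppose |zⁿ − wⁿ| ≤ e. Then P := Π((w − C̊) ∩ Σ) is a ball of radius (1 + 1/K)e centred at Π(w), Q := Π((z − C̊) ∩ Σ) is a ball of radius ((K+1)e + zⁿ − wⁿ)/K ≥ e centred at Π(z), and P ∩ Q is nonempty. -/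

import Mathlib

open Set Topology

/-!
Cutting the downward cone `p - C̊` by the level `yⁿ = pⁿ - tK` leaves exactly the points
`Π p - t v` with `‖v‖ < 1`, i.e. the ball of radius `t` about `Π p`. For the two cones the radii
are `e + e/K > e` and `e + (e + zⁿ - wⁿ)/K ≥ e`, while `Π` is `1`-Lipschitz, so the centres are
at distance at most `e`, which is less than the sum of the radii.
-/

/-- Append a last coordinate to a vector of `ℝⁿ`, giving a vector of `ℝⁿ⁺¹`. -/
noncomputable def snocE {n : ℕ} (v : EuclideanSpace ℝ (Fin n)) (a : ℝ) :
    EuclideanSpace ℝ (Fin (n + 1)) :=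
  WithLp.toLp 2 (Fin.snoc (fun j => v j) a)

/-- Projection of `ℝⁿ⁺¹` onto the first `n` coordinates. -/
noncomputable def projE {n : ℕ} (y : EuclideanSpace ℝ (Fin (n + 1))) :
    EuclideanSpace ℝ (Fin n) :=
  WithLp.toLp 2 (fun i : Fin n => y i.castSucc)

/-- The open cone `C̊ = ℝ_{>0} · (B_{ℝⁿ}(0,1) × {K})` with axis the last coordinate. -/
def coneSet (n : ℕ) (K : ℝ) : Set (EuclideanSpace ℝ (Fin (n + 1))) :=
  {c | ∃ t : ℝ, 0 < t ∧ ∃ v : EuclideanSpace ℝ (Fin n), ‖v‖ < 1 ∧ c = t • snocE v K}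

section

variable {n : ℕ}

@[simp] lemma snocE_last (v : EuclideanSpace ℝ (Fin n)) (a : ℝ) :
    snocE v a (Fin.last n) = a := by
  simp [snocE]

@[simp] lemma projE_snocE (v : EuclideanSpace ℝ (Fin n)) (a : ℝ) : projE (snocE v a) = v := by
  ext i; simp [projE, snocE]

@[simp] lemma projE_sub (x y : EuclideanSpace ℝ (Fin (n + 1))) :
    projE (x - y) = projE x - projE y := rfl

@[simp] lemma projE_smul (c : ℝ) (y : EuclideanSpace ℝ (Fin (n + 1))) :
    projE (c • y) = c • projE y := rfl

lemma norm_projE_le (y : EuclideanSpace ℝ (Fin (n + 1))) : ‖projE y‖ ≤ ‖y‖ := by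
  simp only [EuclideanSpace.norm_eq, Fin.sum_univ_castSucc]
  gcongr
  exact le_add_of_nonneg_right (by positivity)

lemma dist_projE_le (x y : EuclideanSpace ℝ (Fin (n + 1))) :
    dist (projE x) (projE y) ≤ dist x y := by
  simpa only [dist_eq_norm, projE_sub] using norm_projE_le (x - y)

lemma projE_image_sub_coneSet_inter_level {K : ℝ} (hK : K ≠ 0)
    (p : EuclideanSpace ℝ (Fin (n + 1))) {h t : ℝ} (hth : p (Fin.last n) - h = t * K) :
    projE '' (((fun c => p - c) '' coneSet n K) ∩ {y | y (Fin.last n) = h}) =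
      Metric.ball (projE p) t := by
  ext u
  constructor
  · rintro ⟨_, ⟨⟨_, ⟨s, hs, v, hv, rfl⟩, rfl⟩, hy⟩, rfl⟩
    have hst : s = t := by
      simp only [mem_ofPred_eq, PiLp.sub_apply, PiLp.smul_apply, snocE_last, smul_eq_mul] at hy
      exact mul_right_cancel₀ hK (by linarith)
    subst hst
    rw [projE_sub, projE_smul, projE_snocE, Metric.mem_ball, dist_eq_norm, sub_sub_cancel_left,
      norm_neg, norm_smul, Real.norm_of_nonneg hs.le]
    exact mul_lt_of_lt_one_right hs hv
  · intro hu
    have ht : 0 < t := Metric.pos_of_mem_ball hu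
    set v := t⁻¹ • (projE p - u)
    have hv : ‖v‖ < 1 := by
      rw [norm_smul, Real.norm_of_nonneg (inv_nonneg.2 ht.le), ← dist_eq_norm, dist_comm,
        inv_mul_lt_one₀ ht]
      exact hu
    refine ⟨p - t • snocE v K, ⟨⟨_, ⟨t, ht, v, hv, rfl⟩, rfl⟩, ?_⟩, ?_⟩
    · simp only [mem_ofPred_eq, PiLp.sub_apply, PiLp.smul_apply, snocE_last, smul_eq_mul]
      linarith
    · rw [projE_sub, projE_smul, projE_snocE, smul_inv_smul₀ ht.ne', sub_sub_cancel]

end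

/-- Cone-intersection lemma: the downward cones at `w` and `z`, cut by the horizontal
hyperplane `Σ = {yⁿ = wⁿ − (K+1)e}` and projected to the first `n` coordinates, are the open
balls of radii `(1 + 1/K)e` about `Π(w)` and `((K+1)e + zⁿ − wⁿ)/K ≥ e` about `Π(z)`
respectively, and these balls intersect. -/
theorem cone_sections_are_balls_and_intersect {n : ℕ} (K : ℝ) (hK : 0 < K)
    (w z : EuclideanSpace ℝ (Fin (n + 1)))
    (e : ℝ) (he : e = ‖w - z‖) (hepos : 0 < e)
    (hvert : |z (Fin.last n) - w (Fin.last n)| ≤ e) :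
    let Sig : Set (EuclideanSpace ℝ (Fin (n + 1))) :=
      {y | y (Fin.last n) = w (Fin.last n) - (K + 1) * e}
    let P : Set (EuclideanSpace ℝ (Fin n)) :=
      projE '' (((fun c => w - c) '' coneSet n K) ∩ Sig)
    let Q : Set (EuclideanSpace ℝ (Fin n)) :=
      projE '' (((fun c => z - c) '' coneSet n K) ∩ Sig)
    P = Metric.ball (projE w) ((1 + 1 / K) * e) ∧
    Q = Metric.ball (projE z) (((K + 1) * e + (z (Fin.last n) - w (Fin.last n))) / K) ∧
    e ≤ ((K + 1) * e + (z (Fin.last n) - w (Fin.last n))) / K ∧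
    (P ∩ Q).Nonempty := by
  intro Sig P Q
  have hP : P = Metric.ball (projE w) ((1 + 1 / K) * e) :=
    projE_image_sub_coneSet_inter_level hK.ne' w (by field_simp; ring)
  have hQ : Q = Metric.ball (projE z) (((K + 1) * e + (z (Fin.last n) - w (Fin.last n))) / K) :=
    projE_image_sub_coneSet_inter_level hK.ne' z (by rw [div_mul_cancel₀ _ hK.ne']; ring)
  have he_lt : e < (1 + 1 / K) * e := lt_mul_of_one_lt_left hepos (by simp [hK])
  have he_le : e ≤ ((K + 1) * e + (z (Fin.last n) - w (Fin.last n))) / K := by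
    rw [le_div_iff₀ hK]
    linarith [(abs_le.mp hvert).1]
  have hdist : dist (projE w) (projE z) ≤ e := he ▸ dist_eq_norm w z ▸ dist_projE_le w z
  refine ⟨hP, hQ, he_le, ?_⟩
  rw [hP, hQ, ← not_disjoint_iff_nonempty_inter, disjoint_ball_ball_iff (by linarith) (by linarith)]
  linarith
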